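/- arXiv:2106.02375 — 3 statements merged into one kernel-verified Lean document; each statement's English description precedes it below -/
import Mathlib

section
/- For a unitary channel Φ_0(X)=UXU† with U a d×d unitary, min over unit vectors |ψ⟩∈ℂ^d⊗ℂ^d of ⟨ψ|(U⊗I)|ψ⟩⟨ψ|(U⊗I)†|ψ⟩ equals min over unit vectors |φ⟩∈ℂ^d of |⟨φ|U|φ⟩|², i.e., the squared distance from zero to the numerical range of U. -/
/-!
Slicing `ψ` along the ancilla, `ψ = ∑ⱼ ψⱼ ⊗ eⱼ`, gives `⟨ψ|(U⊗I)|ψ⟩ = ∑ⱼ ⟨ψⱼ|U|ψⱼ⟩` with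
`∑ⱼ ‖ψⱼ‖² = 1`, a convex combination of points of the numerical range `W(U)`. A unitary is normal,
so in an orthonormal eigenbasis `⟨φ|U|φ⟩ = ∑ᵢ λᵢ |⟨bᵢ|φ⟩|²` and the weights `|⟨bᵢ|φ⟩|²` can be
any probability vector; hence `W(U)` is convex and the combination lies in it. Conversely `φ ⊗ e₀`
realises every point of `W(U)`. So `W(U ⊗ I) = W(U)`, and the two infima are over the same set.
-/

open Matrix Kronecker Module
open scoped ComplexStarModule InnerProductSpace

section InnerProductSpace

variable {𝕜 E : Type*} [RCLike 𝕜] [NormedAddCommGroup E] [InnerProductSpace 𝕜 E]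

theorem OrthonormalBasis.inner_self_map_eq_sum_of_eigenvectors {ι : Type*} [Fintype ι]
    (b : OrthonormalBasis ι 𝕜 E) {T : E →L[𝕜] E} {μ : ι → 𝕜} (hb : ∀ i, T (b i) = μ i • b i)
    (x : E) : ⟪x, T x⟫_𝕜 = ∑ i, μ i * (‖⟪b i, x⟫_𝕜‖ : 𝕜) ^ 2 := by
  have hTx : T x = ∑ i, (μ i * ⟪b i, x⟫_𝕜) • b i := by
    conv_lhs => rw [← b.sum_repr' x]
    simp [hb, smul_smul, mul_comm]
  rw [hTx, inner_sum]
  refine Finset.sum_congr rfl fun i _ => ?_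
  rw [inner_smul_right, ← inner_conj_symm x (b i), mul_assoc, RCLike.mul_conj]

theorem LinearMap.IsSymmetric.exists_orthonormalBasis_eigenvector_of_commute
    [FiniteDimensional 𝕜 E] {A B : E →ₗ[𝕜] E} (hA : A.IsSymmetric) (hB : B.IsSymmetric)
    (hAB : Commute A B) :
    ∃ (b : OrthonormalBasis (Fin (finrank 𝕜 E)) 𝕜 E) (μ ν : Fin (finrank 𝕜 E) → 𝕜),
      ∀ i, A (b i) = μ i • b i ∧ B (b i) = ν i • b i := by
  let V : 𝕜 × 𝕜 → Submodule 𝕜 E := fun ν => End.eigenspace A ν.2 ⊓ End.eigenspace B ν.1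
  have hV : DirectSum.IsInternal V := hA.directSum_isInternal_of_commute hB hAB
  have : Fintype {ν // V ν ≠ ⊥} :=
    (Submodule.finite_ne_bot_of_iSupIndep hV.submodule_iSupIndep).fintype
  have hV' : DirectSum.IsInternal fun ν : {ν // V ν ≠ ⊥} => V ν :=
    DirectSum.isInternal_ne_bot_iff.mpr hV
  have hOrth : OrthogonalFamily 𝕜 (fun ν : {ν // V ν ≠ ⊥} => V ν) fun ν => (V ν).subtypeₗᵢ :=
    (hA.orthogonalFamily_eigenspace_inf_eigenspace hB).comp Subtype.val_injective
  let ν i := (hV'.subordinateOrthonormalBasisIndex rfl i hOrth).val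
  refine ⟨hV'.subordinateOrthonormalBasis rfl hOrth, fun i => (ν i).2, fun i => (ν i).1,
    fun i => ?_⟩
  have hmem := Submodule.mem_inf.mp (hV'.subordinateOrthonormalBasis_subordinate rfl i hOrth)
  exact ⟨End.mem_eigenspace_iff.mp hmem.1, End.mem_eigenspace_iff.mp hmem.2⟩

end InnerProductSpace

section Normal

variable {E : Type*} [NormedAddCommGroup E] [InnerProductSpace ℂ E] [FiniteDimensional ℂ E]

theorem ContinuousLinearMap.exists_orthonormalBasis_eigenvector_of_isStarNormal
    (T : E →L[ℂ] E) [IsStarNormal T] :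
    ∃ (b : OrthonormalBasis (Fin (finrank ℂ E)) ℂ E) (μ : Fin (finrank ℂ E) → ℂ),
      ∀ i, T (b i) = μ i • b i := by
  have hRe : ((ℜ T : E →L[ℂ] E) : E →ₗ[ℂ] E).IsSymmetric := (ℜ T).prop.isSymmetric
  have hIm : ((ℑ T : E →L[ℂ] E) : E →ₗ[ℂ] E).IsSymmetric := (ℑ T).prop.isSymmetric
  have hcomm := (Commute.realPart_imaginaryPart T).map ContinuousLinearMap.toLinearMapRingHom
  obtain ⟨b, μ, ν, hb⟩ := hRe.exists_orthonormalBasis_eigenvector_of_commute hIm hcomm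
  refine ⟨b, fun i => μ i + Complex.I * ν i, fun i => ?_⟩
  obtain ⟨hμ, hν⟩ := hb i
  rw [← realPart_add_I_smul_imaginaryPart T]
  simp only [ContinuousLinearMap.coe_coe] at hμ hν
  simp only [_root_.add_apply, _root_.smul_apply, hμ, hν, smul_smul, add_smul]

/-- Convexity of the numerical range of a normal operator: `y` is chosen with eigenbasis weights
`‖⟪b i, y⟫‖² = ∑ j ‖⟪b i, x j⟫‖²`. -/
theorem ContinuousLinearMap.exists_inner_self_map_eq_sum_of_isStarNormal (T : E →L[ℂ] E)
    [IsStarNormal T] {ι : Type*} [Fintype ι] (x : ι → E) (hx : ∑ j, ‖x j‖ ^ 2 = 1) :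
    ∃ y : E, ‖y‖ = 1 ∧ ⟪y, T y⟫_ℂ = ∑ j, ⟪x j, T (x j)⟫_ℂ := by
  obtain ⟨b, μ, hb⟩ := T.exists_orthonormalBasis_eigenvector_of_isStarNormal
  let p i := ∑ j, ‖⟪b i, x j⟫_ℂ‖ ^ 2
  let y := b.repr.symm (WithLp.toLp 2 fun i => (√(p i) : ℂ))
  have hy i : ‖⟪b i, y⟫_ℂ‖ ^ 2 = p i := by
    rw [← b.repr_apply_apply, LinearIsometryEquiv.apply_symm_apply, Complex.norm_real,
      Real.norm_eq_abs, sq_abs, Real.sq_sqrt (by positivity)]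
  refine ⟨y, ?_, ?_⟩
  · rw [← pow_eq_one_iff_of_nonneg (norm_nonneg y) two_ne_zero, ← b.sum_sq_norm_inner_right]
    simp only [hy, p]
    rw [Finset.sum_comm, ← hx]
    simp only [b.sum_sq_norm_inner_right]
  · simp only [b.inner_self_map_eq_sum_of_eigenvectors hb, ← RCLike.ofReal_pow, hy, p,
      RCLike.ofReal_sum, Finset.mul_sum]
    exact Finset.sum_comm

end Normal

namespace Matrix

variable {m n 𝕜 : Type*} [Fintype m] [Fintype n]

theorem dotProduct_eq_sum_slices {R : Type*} [NonUnitalNonAssocSemiring R] (v ψ : m × n → R) :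
    v ⬝ᵥ ψ = ∑ j, (fun i => v (i, j)) ⬝ᵥ (fun i => ψ (i, j)) := by
  simp only [dotProduct, Fintype.sum_prod_type]
  exact Finset.sum_comm

variable [DecidableEq n]

theorem dotProduct_kronecker_one_mulVec {R : Type*} [Semiring R] (A : Matrix m m R)
    (v ψ : m × n → R) :
    v ⬝ᵥ ((A ⊗ₖ (1 : Matrix n n R)) *ᵥ ψ)
      = ∑ j, (fun i => v (i, j)) ⬝ᵥ (A *ᵥ fun i => ψ (i, j)) := by
  simp only [dotProduct, mulVec, Fintype.sum_prod_type, kroneckerMap_apply, one_apply, mul_ite,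
    mul_one, mul_zero, ite_mul, zero_mul, Finset.sum_ite_eq, Finset.mem_univ, if_true]
  exact Finset.sum_comm

variable [RCLike 𝕜]

def numericalRange (A : Matrix m m 𝕜) : Set 𝕜 :=
  {star x ⬝ᵥ (A *ᵥ x) | (x : m → 𝕜) (_ : star x ⬝ᵥ x = 1)}

theorem star_dotProduct_mulVec_eq_inner [DecidableEq m] (A : Matrix m m 𝕜) (x : m → 𝕜) :
    star x ⬝ᵥ (A *ᵥ x)
      = ⟪WithLp.toLp 2 x, toEuclideanCLM (n := m) (𝕜 := 𝕜) A (WithLp.toLp 2 x)⟫_𝕜 := by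
  rw [EuclideanSpace.inner_eq_star_dotProduct, ofLp_toEuclideanCLM, dotProduct_comm]

theorem star_dotProduct_self_eq_norm_sq (x : m → 𝕜) :
    star x ⬝ᵥ x = (‖WithLp.toLp 2 x‖ : 𝕜) ^ 2 := by
  rw [← inner_self_eq_norm_sq_to_K, EuclideanSpace.inner_eq_star_dotProduct, dotProduct_comm]

theorem numericalRange_subset_kronecker_one [Nonempty n] (A : Matrix m m 𝕜) :
    numericalRange A ⊆ numericalRange (A ⊗ₖ (1 : Matrix n n 𝕜)) := by
  rintro _ ⟨φ, hφ, rfl⟩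
  let j₀ : n := Classical.arbitrary n
  let ψ : m × n → 𝕜 := fun p => Pi.single (M := fun _ => m → 𝕜) j₀ φ p.2 p.1
  have hslice (f : (m → 𝕜) → 𝕜) (hf : f 0 = 0) : ∑ j, f (fun i => ψ (i, j)) = f φ := by
    refine (Fintype.sum_eq_single j₀ fun j hj => ?_).trans (by simp [ψ])
    convert hf
    simp [ψ, hj]
  refine ⟨ψ, ?_, ?_⟩
  · rw [dotProduct_eq_sum_slices, ← hφ]
    exact hslice (fun v => star v ⬝ᵥ v) (by simp)
  · rw [dotProduct_kronecker_one_mulVec]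
    exact hslice (fun v => star v ⬝ᵥ (A *ᵥ v)) (by simp)

theorem numericalRange_kronecker_one_subset [DecidableEq m] (A : Matrix m m ℂ)
    [IsStarNormal A] : numericalRange (A ⊗ₖ (1 : Matrix n n ℂ)) ⊆ numericalRange A := by
  rintro _ ⟨ψ, hψ, rfl⟩
  let x j : EuclideanSpace ℂ m := WithLp.toLp 2 fun i => ψ (i, j)
  have hx : ∑ j, ‖x j‖ ^ 2 = 1 := by
    rw [dotProduct_eq_sum_slices] at hψ
    have hx' : ((∑ j, ‖x j‖ ^ 2 : ℝ) : ℂ) = 1 := by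
      push_cast
      exact (Finset.sum_congr rfl fun j _ => (star_dotProduct_self_eq_norm_sq _).symm).trans hψ
    exact_mod_cast hx'
  obtain ⟨y, hy, hval⟩ :=
    (toEuclideanCLM (n := m) (𝕜 := ℂ) A).exists_inner_self_map_eq_sum_of_isStarNormal x hx
  refine ⟨y.ofLp, ?_, ?_⟩
  · simp [star_dotProduct_self_eq_norm_sq, hy]
  · rw [star_dotProduct_mulVec_eq_inner, WithLp.toLp_ofLp, hval, dotProduct_kronecker_one_mulVec]
    exact Finset.sum_congr rfl fun j _ => (star_dotProduct_mulVec_eq_inner A _).symm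

theorem numericalRange_kronecker_one [DecidableEq m] [Nonempty n] (A : Matrix m m ℂ)
    [IsStarNormal A] : numericalRange (A ⊗ₖ (1 : Matrix n n ℂ)) = numericalRange A :=
  (numericalRange_kronecker_one_subset A).antisymm (numericalRange_subset_kronecker_one A)

end Matrix

/-- for a unitary `U`, the minimum over unit vectors `|ψ⟩ ∈ ℂ^d⊗ℂ^d` of
`|⟨ψ|(U⊗I)|ψ⟩|²` equals the minimum over unit vectors `|φ⟩ ∈ ℂ^d` of `|⟨φ|U|φ⟩|²`,
i.e. the squared distance from zero to the numerical range of `U`. -/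
theorem stmt9 {d : ℕ} (hd : 0 < d) (U : Matrix (Fin d) (Fin d) ℂ) (hU : Uᴴ * U = 1) :
    sInf {t : ℝ | ∃ ψ : Fin d × Fin d → ℂ, star ψ ⬝ᵥ ψ = 1 ∧
        t = ‖star ψ ⬝ᵥ ((U ⊗ₖ (1 : Matrix (Fin d) (Fin d) ℂ)) *ᵥ ψ)‖ ^ 2}
      = sInf {t : ℝ | ∃ φ : Fin d → ℂ, star φ ⬝ᵥ φ = 1 ∧
        t = ‖star φ ⬝ᵥ (U *ᵥ φ)‖ ^ 2} := by
  have : Nonempty (Fin d) := ⟨⟨0, hd⟩⟩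
  have : IsStarNormal U := isStarNormal_of_mem_unitary (mem_unitaryGroup_iff'.mpr hU)
  have hset {k : Type} [Fintype k] (A : Matrix k k ℂ) :
      {t : ℝ | ∃ x : k → ℂ, star x ⬝ᵥ x = 1 ∧ t = ‖star x ⬝ᵥ (A *ᵥ x)‖ ^ 2}
        = (fun z => ‖z‖ ^ 2) '' numericalRange A := by
    ext t
    simp [numericalRange, eq_comm]
  rw [hset, hset, numericalRange_kronecker_one]
end

section
/- Let M = Σ_k α_k |x_k⟩⟨x_k| be the spectral decomposition of a positive semidefinite d×d matrix with all α_k > 0. Then the quantum-classical channel ρ ↦ Σ_i |i⟩⟨i| Tr(M_i ρ) with effects {M_i} has Kraus operators {√(α_{k_i}^i) |i⟩⟨x_{k_i}^i|}, and span of these Kraus operators for POVM 𝒫_0 is not contained in the corresponding span for POVM 𝒫_1 if and only if there exists an index i for which supp(M_i) ⊄ supp(N_i). -/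
/-!
Conjugating `ρ` by `√α |i⟩⟨x|` gives `α ⟨x|ρ|x⟩ |i⟩⟨i|`, and summing over the eigenpairs of
`M_i` gives `Tr(M_i ρ) |i⟩⟨i|`. A Kraus operator `√α |i⟩⟨x|` is the matrix whose only nonzero
row is row `i`, equal to `√α x̄`. Hence the span of the Kraus operators is the product over `i`
of the spaces `span {x̄_k^i}`, and one such product lies in another iff this holds row by row.
Conjugation preserves inclusions of spans, and by orthonormality `span {x_k^i} = supp M_i`.
-/

open Matrix

section Span

variable {R M : Type*} [Semiring R] [AddCommMonoid M] [Module R M]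

theorem Submodule.span_range_smul_of_isUnit {ι : Type*} {c : ι → R} (hc : ∀ i, IsUnit (c i))
    (v : ι → M) : span R (Set.range fun i => c i • v i) = span R (Set.range v) := by
  simp only [span_range_eq_iSup, span_singleton_smul_eq (hc _)]

theorem Submodule.span_range_sigma_single {m : Type*} [DecidableEq m] [Finite m] {κ : m → Type*}
    (f : (Σ i, κ i) → M) :
    span R (Set.range fun p : Σ i, κ i => (Pi.single p.1 (f p) : m → M)) =
      pi Set.univ fun i => span R (Set.range fun k => f ⟨i, k⟩) := by
  rw [← iSup_map_single]
  simp only [map_span, ← Set.range_comp]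
  simp only [span_range_eq_iSup, iSup_sigma]
  rfl

theorem Submodule.pi_univ_le_pi_univ_iff {m : Type*} [DecidableEq m] {p q : m → Submodule R M} :
    pi Set.univ p ≤ pi Set.univ q ↔ ∀ i, p i ≤ q i := by
  refine ⟨fun h i v hv => ?_, fun h => pi_mono fun i _ => h i⟩
  simpa using h (le_comap_single_pi p hv) i trivial

end Span

theorem Submodule.span_range_star_le_iff {R V ι κ : Type*} [CommSemiring R] [StarRing R]
    [AddCommMonoid V] [StarAddMonoid V] [Module R V] [StarModule R V] {v : ι → V} {w : κ → V} :
    span R (Set.range fun k => star (v k)) ≤ span R (Set.range fun k => star (w k)) ↔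
      span R (Set.range v) ≤ span R (Set.range w) := by
  have h := (orderIsoMapComap (starLinearEquiv R : V ≃ₗ⋆[R] V)).le_iff_le
    (x := span R (Set.range v)) (y := span R (Set.range w))
  rwa [orderIsoMapComap_apply, orderIsoMapComap_apply, map_span, map_span, ← Set.range_comp,
    ← Set.range_comp] at h

theorem Matrix.vecMulVec_single_one {m n R : Type*} [DecidableEq m] [Semiring R] (i : m)
    (w : n → R) : vecMulVec (Pi.single i 1) w = Pi.single i w := by
  ext a b
  by_cases h : a = i <;> simp [vecMulVec_apply, h]

theorem Matrix.span_range_smul_vecMulVec_single {R m n : Type*} [Semiring R] [DecidableEq m]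
    [Finite m] {κ : m → Type*} {c : (Σ i, κ i) → R} (hc : ∀ p, IsUnit (c p))
    (v : (i : m) → κ i → n → R) :
    Submodule.span R (Set.range fun p : Σ i, κ i => c p • vecMulVec (Pi.single p.1 1) (v p.1 p.2)) =
      Submodule.pi Set.univ fun i => Submodule.span R (Set.range (v i)) := by
  rw [Submodule.span_range_smul_of_isUnit hc]
  simp_rw [vecMulVec_single_one]
  exact Submodule.span_range_sigma_single fun p => v p.1 p.2

theorem Matrix.star_single_one {m R : Type*} [DecidableEq m] [Semiring R] [StarRing R] (i : m) :
    star (Pi.single i 1 : m → R) = Pi.single i 1 := by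
  ext a
  by_cases h : a = i <;> simp [h]

theorem Matrix.vecMulVec_mul_mul_conjTranspose {R m n : Type*} [CommSemiring R] [StarRing R]
    [Fintype n] (u : m → R) (v : n → R) (ρ : Matrix n n R) :
    vecMulVec u (star v) * ρ * (vecMulVec u (star v))ᴴ =
      (vecMulVec v (star v) * ρ).trace • vecMulVec u (star u) := by
  rw [conjTranspose_vecMulVec, star_star, vecMulVec_mul, vecMulVec_mul_vecMulVec, vecMulVec_smul,
    vecMulVec_mul, trace_vecMulVec, dotProduct_comm]

theorem Matrix.sum_sqrt_smul_vecMulVec_single_mul_mul_conjTranspose {m n ι : Type*}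
    [DecidableEq m] [Fintype n] [Fintype ι] (i : m) {α : ι → ℝ} (hα : ∀ k, 0 ≤ α k)
    (x : ι → n → ℂ) (ρ : Matrix n n ℂ) :
    ∑ k, ((√(α k) : ℂ) • vecMulVec (Pi.single i 1) (star (x k))) * ρ *
        ((√(α k) : ℂ) • vecMulVec (Pi.single i 1) (star (x k)))ᴴ =
      ((∑ k, (α k : ℂ) • vecMulVec (x k) (star (x k))) * ρ).trace • Matrix.single i i 1 := by
  rw [Finset.sum_mul, trace_sum, Finset.sum_smul]
  refine Finset.sum_congr rfl fun k _ => ?_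
  have hsq : star (√(α k) : ℂ) * (√(α k) : ℂ) = α k := by
    rw [Complex.star_def, Complex.conj_ofReal, ← Complex.ofReal_mul, Real.mul_self_sqrt (hα k)]
  rw [conjTranspose_smul, Matrix.mul_smul, Matrix.smul_mul, Matrix.smul_mul, smul_smul, hsq,
    vecMulVec_mul_mul_conjTranspose, star_single_one, ← single_eq_single_vecMulVec_single,
    Matrix.smul_mul, trace_smul, smul_smul, smul_eq_mul]

theorem Matrix.sum_smul_vecMulVec_mulVec {R n ι : Type*} [CommSemiring R] [StarRing R]
    [Fintype n] [Fintype ι] (α : ι → R) (x : ι → n → R) (w : n → R) :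
    (∑ k, α k • vecMulVec (x k) (star (x k))) *ᵥ w = ∑ k, (α k * (star (x k) ⬝ᵥ w)) • x k := by
  simp only [sum_mulVec, smul_mulVec, vecMulVec_mulVec, op_smul_eq_smul, smul_smul]

theorem Matrix.range_mulVecLin_sum_smul_vecMulVec {K n ι : Type*} [Field K] [StarRing K]
    [Fintype n] [Fintype ι] [DecidableEq ι] {α : ι → K} (hα : ∀ k, α k ≠ 0) {x : ι → n → K}
    (hx : ∀ k l, star (x k) ⬝ᵥ x l = if k = l then 1 else 0) :
    LinearMap.range (∑ k, α k • vecMulVec (x k) (star (x k))).mulVecLin =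
      Submodule.span K (Set.range x) := by
  refine le_antisymm ?_ (Submodule.span_le.mpr ?_)
  · rintro _ ⟨w, rfl⟩
    rw [mulVecLin_apply, sum_smul_vecMulVec_mulVec]
    exact Submodule.sum_mem _ fun k _ => Submodule.smul_mem _ _ (Submodule.subset_span ⟨k, rfl⟩)
  · rintro _ ⟨l, rfl⟩
    have heig : (∑ k, α k • vecMulVec (x k) (star (x k))) *ᵥ x l = α l • x l := by
      simp [sum_smul_vecMulVec_mulVec, hx]
    refine ⟨(α l)⁻¹ • x l, ?_⟩
    rw [mulVecLin_apply, mulVec_smul, heig, smul_smul, inv_mul_cancel₀ (hα l), one_smul]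

theorem stmt10_general {d m : ℕ} (r s : Fin m → ℕ)
    (α : (i : Fin m) → Fin (r i) → ℝ) (β : (i : Fin m) → Fin (s i) → ℝ)
    (x : (i : Fin m) → Fin (r i) → (Fin d → ℂ)) (y : (i : Fin m) → Fin (s i) → (Fin d → ℂ))
    (hα : ∀ i k, 0 < α i k) (hβ : ∀ i k, 0 < β i k)
    (hx : ∀ i k l, star (x i k) ⬝ᵥ x i l = if k = l then 1 else 0)
    (hy : ∀ i k l, star (y i k) ⬝ᵥ y i l = if k = l then 1 else 0)
    (M N : Fin m → Matrix (Fin d) (Fin d) ℂ)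
    (hM : ∀ i, M i = ∑ k, (α i k : ℂ) • vecMulVec (x i k) (star (x i k)))
    (hN : ∀ i, N i = ∑ k, (β i k : ℂ) • vecMulVec (y i k) (star (y i k))) :
    (∀ ρ : Matrix (Fin d) (Fin d) ℂ,
      ∑ i, ∑ k, ((Real.sqrt (α i k) : ℂ) • vecMulVec (Pi.single i 1) (star (x i k))) * ρ *
          ((Real.sqrt (α i k) : ℂ) • vecMulVec (Pi.single i 1) (star (x i k)))ᴴ
        = ∑ i, (M i * ρ).trace • Matrix.single i i (1 : ℂ)) ∧
    (¬ Submodule.span ℂ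
        (Set.range fun p : Σ i : Fin m, Fin (r i) =>
          (Real.sqrt (α p.1 p.2) : ℂ) • vecMulVec (Pi.single p.1 1) (star (x p.1 p.2))) ≤
      Submodule.span ℂ
        (Set.range fun p : Σ i : Fin m, Fin (s i) =>
          (Real.sqrt (β p.1 p.2) : ℂ) • vecMulVec (Pi.single p.1 1) (star (y p.1 p.2)))
      ↔ ∃ i, ¬ LinearMap.range (M i).mulVecLin ≤ LinearMap.range (N i).mulVecLin) := by
  have sqrt_isUnit {c : ℝ} (hc : 0 < c) : IsUnit (√c : ℂ) :=
    Ne.isUnit (Complex.ofReal_ne_zero.mpr (Real.sqrt_pos.mpr hc).ne')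
  refine ⟨fun ρ => Finset.sum_congr rfl fun i _ => ?_, ?_⟩
  · rw [hM i]
    exact sum_sqrt_smul_vecMulVec_single_mul_mul_conjTranspose i (fun k => (hα i k).le) (x i) ρ
  rw [span_range_smul_vecMulVec_single (fun p => sqrt_isUnit (hα p.1 p.2)) fun i k => star (x i k),
    span_range_smul_vecMulVec_single (fun p => sqrt_isUnit (hβ p.1 p.2)) fun i k => star (y i k)]
  refine (not_congr Submodule.pi_univ_le_pi_univ_iff).trans (not_forall.trans ?_)
  refine exists_congr fun i => not_congr ?_
  rw [hM i, hN i,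
    range_mulVecLin_sum_smul_vecMulVec (fun k => Complex.ofReal_ne_zero.mpr (hα i k).ne') (hx i),
    range_mulVecLin_sum_smul_vecMulVec (fun k => Complex.ofReal_ne_zero.mpr (hβ i k).ne') (hy i)]
  exact Submodule.span_range_star_le_iff

/-- POVMs `𝒫₀ = {M_i}`, `𝒫₁ = {N_i}` with spectral decompositions
`M_i = Σ_k α_k^i |x_k^i⟩⟨x_k^i|`, `N_i = Σ_k β_k^i |y_k^i⟩⟨y_k^i|` (positive eigenvalues,
orthonormal eigenvectors). The quantum-classical channel `ρ ↦ Σ_i Tr(M_i ρ)|i⟩⟨i|` has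
Kraus operators `√α_k^i |i⟩⟨x_k^i|`, and the span of the Kraus operators of `𝒫₀` is not
contained in the span of those of `𝒫₁` iff `supp(M_i) ⊄ supp(N_i)` for some `i`. -/
theorem stmt10 {d m : ℕ} (r s : Fin m → ℕ)
    (α : (i : Fin m) → Fin (r i) → ℝ) (β : (i : Fin m) → Fin (s i) → ℝ)
    (x : (i : Fin m) → Fin (r i) → (Fin d → ℂ)) (y : (i : Fin m) → Fin (s i) → (Fin d → ℂ))
    (hα : ∀ i k, 0 < α i k) (hβ : ∀ i k, 0 < β i k)
    (hx : ∀ i k l, star (x i k) ⬝ᵥ x i l = if k = l then 1 else 0)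
    (hy : ∀ i k l, star (y i k) ⬝ᵥ y i l = if k = l then 1 else 0)
    (M N : Fin m → Matrix (Fin d) (Fin d) ℂ)
    (hM : ∀ i, M i = ∑ k, (α i k : ℂ) • vecMulVec (x i k) (star (x i k)))
    (hN : ∀ i, N i = ∑ k, (β i k : ℂ) • vecMulVec (y i k) (star (y i k)))
    (hPOVM0 : ∑ i, M i = 1) (hPOVM1 : ∑ i, N i = 1) :
    (∀ ρ : Matrix (Fin d) (Fin d) ℂ,
      ∑ i, ∑ k, ((Real.sqrt (α i k) : ℂ) • vecMulVec (Pi.single i 1) (star (x i k))) * ρ *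
          ((Real.sqrt (α i k) : ℂ) • vecMulVec (Pi.single i 1) (star (x i k)))ᴴ
        = ∑ i, (M i * ρ).trace • Matrix.single i i (1 : ℂ)) ∧
    (¬ Submodule.span ℂ
        (Set.range fun p : Σ i : Fin m, Fin (r i) =>
          (Real.sqrt (α p.1 p.2) : ℂ) • vecMulVec (Pi.single p.1 1) (star (x p.1 p.2))) ≤
      Submodule.span ℂ
        (Set.range fun p : Σ i : Fin m, Fin (s i) =>
          (Real.sqrt (β p.1 p.2) : ℂ) • vecMulVec (Pi.single p.1 1) (star (y p.1 p.2)))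
      ↔ ∃ i, ¬ LinearMap.range (M i).mulVecLin ≤ LinearMap.range (N i).mulVecLin) :=
  stmt10_general r s α β x y hα hβ hx hy M N hM hN
end

section
/- Let Φ_0(X)=Σ_i E_i X E_i† and Φ_1(X)=Σ_j F_j X F_j† be quantum channels on d×d matrices. If span{E_i} ⊄ span{F_j}, then there exist a unit vector |ψ⟩ ∈ ℂ^d⊗ℂ^d, a rank-one projection Ω_0 on ℂ^d⊗ℂ^d, and a real q ∈ (0,1] such that Tr(Ω_0 (Φ_1⊗I)(|ψ⟩⟨ψ|)) = 0 and Tr(Ω_0 (Φ_0⊗I)(|ψ⟩⟨ψ|)) = q > 0. -/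
/-! For the maximally entangled vector `ψ = d^{-1/2} ∑ᵢ |i i⟩` one has
`(A ⊗ 1) ψ = d^{-1/2} vec Aᵀ`, so `Tr(|v⟩⟨v| (Φ ⊗ I)(|ψ⟩⟨ψ|)) = d⁻¹ ∑_K |⟨v, vec Kᵀ⟩|²`, the sum
running over the Kraus operators `K` of `Φ`. Since some `E i₀` lies outside `span {F j}`, a linear
functional vanishing on that span but not at `E i₀` yields a unit vector `v` orthogonal to every
`vec (F j)ᵀ` but not to `vec (E i₀)ᵀ`: the `Φ₁` term vanishes and the `Φ₀` term is positive. By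
Cauchy–Schwarz it is at most `Tr((Φ₀ ⊗ I)(|ψ⟩⟨ψ|)) = 1`. -/

open Matrix Kronecker

namespace Matrix

variable {ι m n : Type*} [Fintype n]

theorem sum_conjTranspose_kronecker_one_mul [Fintype ι] [Fintype m] {R : Type*} [CommSemiring R]
    [StarRing R] [DecidableEq m] [DecidableEq n] (K : ι → Matrix m m R)
    (hK : ∑ i, (K i)ᴴ * K i = 1) :
    ∑ i, (K i ⊗ₖ (1 : Matrix n n R))ᴴ * (K i ⊗ₖ (1 : Matrix n n R)) = 1 := by
  simp_rw [conjTranspose_kronecker, conjTranspose_one, ← mul_kronecker_mul, Matrix.one_mul]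
  rw [← one_kronecker_one, ← hK]
  ext ⟨a, b⟩ ⟨c, e⟩
  simp [Matrix.sum_apply, Finset.sum_mul]

theorem mul_vecMulVec_star_mul_conjTranspose (K : Matrix m n ℂ) (ψ : n → ℂ) :
    K * vecMulVec ψ (star ψ) * Kᴴ = vecMulVec (K *ᵥ ψ) (star (K *ᵥ ψ)) := by
  rw [mul_vecMulVec, vecMulVec_mul, star_mulVec]

theorem trace_vecMulVec_star_mul_vecMulVec_star [Fintype m] (v u : m → ℂ) :
    (vecMulVec v (star v) * vecMulVec u (star u)).trace = (Complex.normSq (star v ⬝ᵥ u) : ℂ) := by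
  rw [vecMulVec_mul_vecMulVec, trace_vecMulVec, dotProduct_smul, smul_eq_mul,
    dotProduct_comm v, star_dotProduct u, RCLike.star_def, Complex.mul_conj]

theorem trace_vecMulVec_mul_sum_conj [Fintype ι] [Fintype m] (v ψ : m → ℂ) (K : ι → Matrix m m ℂ) :
    (vecMulVec v (star v) * ∑ i, K i * vecMulVec ψ (star ψ) * (K i)ᴴ).trace
      = ∑ i, (Complex.normSq (star v ⬝ᵥ (K i *ᵥ ψ)) : ℂ) := by
  simp_rw [Finset.mul_sum, trace_sum, mul_vecMulVec_star_mul_conjTranspose,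
    trace_vecMulVec_star_mul_vecMulVec_star]

theorem normSq_star_dotProduct_le (v u : n → ℂ) :
    Complex.normSq (star v ⬝ᵥ u) ≤ (star v ⬝ᵥ v).re * (star u ⬝ᵥ u).re := by
  have h := inner_mul_inner_self_le (𝕜 := ℂ) (WithLp.toLp 2 v) (WithLp.toLp 2 u)
  simp only [EuclideanSpace.inner_toLp_toLp, dotProduct_comm _ (star _)] at h
  rwa [star_dotProduct u, norm_star, ← sq, ← Complex.normSq_eq_norm_sq] at h

theorem sum_normSq_star_dotProduct_mulVec_le [Fintype ι] [DecidableEq n] {K : ι → Matrix n n ℂ}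
    (hK : ∑ i, (K i)ᴴ * K i = 1) {v ψ : n → ℂ} (hv : star v ⬝ᵥ v = 1) (hψ : star ψ ⬝ᵥ ψ = 1) :
    ∑ i, Complex.normSq (star v ⬝ᵥ (K i *ᵥ ψ)) ≤ 1 := by
  have hnorm : ∑ i, star (K i *ᵥ ψ) ⬝ᵥ (K i *ᵥ ψ) = 1 := by
    simp_rw [star_mulVec, ← dotProduct_mulVec, mulVec_mulVec, ← dotProduct_sum, ← sum_mulVec, hK,
      one_mulVec, hψ]
  calc ∑ i, Complex.normSq (star v ⬝ᵥ (K i *ᵥ ψ))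
      ≤ ∑ i, (star (K i *ᵥ ψ) ⬝ᵥ (K i *ᵥ ψ)).re := Finset.sum_le_sum fun i _ => by
        simpa [hv] using normSq_star_dotProduct_le v (K i *ᵥ ψ)
    _ = 1 := by rw [← Complex.re_sum, hnorm, Complex.one_re]

theorem exists_smul_star_dotProduct_self_eq_one {w : n → ℂ} (hw : w ≠ 0) :
    ∃ c : ℂ, c ≠ 0 ∧ star (c • w) ⬝ᵥ (c • w) = 1 := by
  have hw' : ‖WithLp.toLp 2 w‖ ≠ 0 := by simpa using hw
  refine ⟨(‖WithLp.toLp 2 w‖ : ℂ)⁻¹, by simpa using hw', ?_⟩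
  rw [dotProduct_comm, ← EuclideanSpace.inner_toLp_toLp, WithLp.toLp_smul,
    inner_self_eq_norm_sq_to_K, norm_smul]
  simp [hw']

theorem exists_star_dotProduct_eq_zero_ne_zero_of_notMem_span [DecidableEq n] {u : ι → n → ℂ}
    {x : n → ℂ} (hx : x ∉ Submodule.span ℂ (Set.range u)) :
    ∃ v : n → ℂ, star v ⬝ᵥ v = 1 ∧ (∀ i, star v ⬝ᵥ u i = 0) ∧ star v ⬝ᵥ x ≠ 0 := by
  obtain ⟨f, hfx, hfu⟩ := Submodule.exists_dual_map_eq_bot_of_notMem hx inferInstance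
  set w := star ((dotProductEquiv ℂ n).symm f)
  have hw : ∀ y, star w ⬝ᵥ y = f y := fun y => by
    rw [star_star, ← dotProductEquiv_apply_apply, LinearEquiv.apply_symm_apply]
  have hw0 : w ≠ 0 := by
    rintro hw0
    simp [← hw, hw0] at hfx
  obtain ⟨c, hc, hcw⟩ := exists_smul_star_dotProduct_self_eq_one hw0
  have hfu' : ∀ i, f (u i) = 0 := fun i =>
    LinearMap.le_ker_iff_map.mpr hfu (Submodule.subset_span ⟨i, rfl⟩)
  refine ⟨c • w, hcw, fun i => ?_, ?_⟩ <;> rw [star_smul, smul_dotProduct, hw, smul_eq_mul]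
  · rw [hfu' i, mul_zero]
  · exact mul_ne_zero (star_ne_zero.mpr hc) hfx

end Matrix

section MaxEntangled

variable {n : Type*} [Fintype n] [DecidableEq n]

variable (n) in
noncomputable def maxEntangled : n × n → ℂ :=
  ((√(Fintype.card n) : ℝ) : ℂ)⁻¹ • vec (1 : Matrix n n ℂ)

theorem star_maxEntangled_dotProduct_self [Nonempty n] :
    star (maxEntangled n) ⬝ᵥ maxEntangled n = 1 := by
  have hcard : (0 : ℝ) < Fintype.card n := by exact_mod_cast Fintype.card_pos
  rw [maxEntangled, star_smul, smul_dotProduct, dotProduct_smul, star_vec_dotProduct_vec,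
    conjTranspose_one, Matrix.one_mul, trace_one, smul_eq_mul, smul_eq_mul, ← mul_assoc,
    Complex.star_def, map_inv₀, Complex.conj_ofReal, ← mul_inv, ← Complex.ofReal_mul,
    Real.mul_self_sqrt hcard.le]
  push_cast
  exact inv_mul_cancel₀ (by exact_mod_cast hcard.ne')

theorem kronecker_one_mulVec_maxEntangled (A : Matrix n n ℂ) :
    (A ⊗ₖ (1 : Matrix n n ℂ)) *ᵥ maxEntangled n
      = ((√(Fintype.card n) : ℝ) : ℂ)⁻¹ • vec Aᵀ := by
  rw [maxEntangled, mulVec_smul, kronecker_mulVec_vec, Matrix.one_mul, Matrix.one_mul]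

end MaxEntangled

theorem stmt16_general {d r s : ℕ} (E : Fin r → Matrix (Fin d) (Fin d) ℂ)
    (F : Fin s → Matrix (Fin d) (Fin d) ℂ)
    (hE : ∑ i, (E i)ᴴ * E i = 1)
    (h : ¬ Submodule.span ℂ (Set.range E) ≤ Submodule.span ℂ (Set.range F)) :
    ∃ (ψ v : Fin d × Fin d → ℂ) (q : ℝ),
      star ψ ⬝ᵥ ψ = 1 ∧ star v ⬝ᵥ v = 1 ∧ 0 < q ∧ q ≤ 1 ∧
      (vecMulVec v (star v) *
          ∑ j, (F j ⊗ₖ (1 : Matrix (Fin d) (Fin d) ℂ)) * vecMulVec ψ (star ψ) *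
            ((F j ⊗ₖ (1 : Matrix (Fin d) (Fin d) ℂ)))ᴴ).trace = 0 ∧
      (vecMulVec v (star v) *
          ∑ i, (E i ⊗ₖ (1 : Matrix (Fin d) (Fin d) ℂ)) * vecMulVec ψ (star ψ) *
            ((E i ⊗ₖ (1 : Matrix (Fin d) (Fin d) ℂ)))ᴴ).trace = (q : ℂ) := by
  obtain ⟨i₀, hi₀⟩ : ∃ i, E i ∉ Submodule.span ℂ (Set.range F) := by
    by_contra! hall
    exact h (Submodule.span_le.mpr (Set.range_subset_iff.mpr hall))
  -- `vecT A = vec Aᵀ` definitionally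
  let vecT : Matrix (Fin d) (Fin d) ℂ ≃ₗ[ℂ] (Fin d × Fin d → ℂ) :=
    (LinearEquiv.curry ℂ ℂ _ _).symm
  have hsep : vecT (E i₀) ∉ Submodule.span ℂ (Set.range fun j => vecT (F j)) := by
    rw [Set.range_comp' vecT F, ← LinearEquiv.coe_coe,
      Submodule.apply_mem_span_image_iff_mem_span vecT.injective]
    exact hi₀
  obtain ⟨v, hv, hvF, hvE⟩ := exists_star_dotProduct_eq_zero_ne_zero_of_notMem_span hsep
  have hd : d ≠ 0 := by
    rintro rfl
    simp at hv
  have : Nonempty (Fin d) := ⟨⟨0, Nat.pos_of_ne_zero hd⟩⟩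
  set ψ := maxEntangled (Fin d)
  have hamp : ∀ A, star v ⬝ᵥ ((A ⊗ₖ (1 : Matrix (Fin d) (Fin d) ℂ)) *ᵥ ψ)
      = ((√d : ℝ) : ℂ)⁻¹ * star v ⬝ᵥ vecT A := fun A => by
    rw [kronecker_one_mulVec_maxEntangled, dotProduct_smul, Fintype.card_fin, smul_eq_mul]; rfl
  refine ⟨ψ, v, ∑ i, Complex.normSq (star v ⬝ᵥ ((E i ⊗ₖ 1) *ᵥ ψ)),
    star_maxEntangled_dotProduct_self, hv, ?_,
    sum_normSq_star_dotProduct_mulVec_le (sum_conjTranspose_kronecker_one_mul E hE) hv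
      star_maxEntangled_dotProduct_self, ?_, ?_⟩
  · refine Finset.sum_pos' (fun i _ => Complex.normSq_nonneg _) ⟨i₀, Finset.mem_univ _, ?_⟩
    rw [Complex.normSq_pos, hamp]
    exact mul_ne_zero (by simpa using hd) hvE
  · simp [trace_vecMulVec_mul_sum_conj, hamp, hvF]
  · rw [trace_vecMulVec_mul_sum_conj, Complex.ofReal_sum]

/-- for quantum channels `Φ₀(X)=Σ_i E_i X E_i†`, `Φ₁(X)=Σ_j F_j X F_j†`,
if `span{E_i} ⊄ span{F_j}` then there exist a unit vector `|ψ⟩ ∈ ℂ^d⊗ℂ^d`, a rank-one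
projection `Ω₀ = |v⟩⟨v|`, and `q ∈ (0,1]` with
`Tr(Ω₀ (Φ₁⊗I)(|ψ⟩⟨ψ|)) = 0` and `Tr(Ω₀ (Φ₀⊗I)(|ψ⟩⟨ψ|)) = q > 0`. -/
theorem stmt16 {d r s : ℕ} (E : Fin r → Matrix (Fin d) (Fin d) ℂ)
    (F : Fin s → Matrix (Fin d) (Fin d) ℂ)
    (hE : ∑ i, (E i)ᴴ * E i = 1) (hF : ∑ j, (F j)ᴴ * F j = 1)
    (h : ¬ Submodule.span ℂ (Set.range E) ≤ Submodule.span ℂ (Set.range F)) :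
    ∃ (ψ v : Fin d × Fin d → ℂ) (q : ℝ),
      star ψ ⬝ᵥ ψ = 1 ∧ star v ⬝ᵥ v = 1 ∧ 0 < q ∧ q ≤ 1 ∧
      (vecMulVec v (star v) *
          ∑ j, (F j ⊗ₖ (1 : Matrix (Fin d) (Fin d) ℂ)) * vecMulVec ψ (star ψ) *
            ((F j ⊗ₖ (1 : Matrix (Fin d) (Fin d) ℂ)))ᴴ).trace = 0 ∧
      (vecMulVec v (star v) *
          ∑ i, (E i ⊗ₖ (1 : Matrix (Fin d) (Fin d) ℂ)) * vecMulVec ψ (star ψ) *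
            ((E i ⊗ₖ (1 : Matrix (Fin d) (Fin d) ℂ)))ᴴ).trace = (q : ℂ) :=
  stmt16_general E F hE h
end
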